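/- arXiv:1712.06370 — 2 statements merged into one kernel-verified Lean document; each statement's English description precedes it below -/
import Mathlib

section
/- Double coset decomposition: G = Q·H^{ext} ∪ Q·m_A·H^{ext}, i.e. every g ∈ GSp(4,k) can be written either as g = q·h or as g = q·m_A·h with q ∈ Q and h ∈ H^{ext}, where m_A is the 4×4 matrix with rows (1,0,0,0), (1,1,0,0), (0,0,1,−1), (0,0,0,1). -/
open Matrix

/-- The 4×4 symplectic form matrix `J = [[0, E], [-E, 0]]` in 2×2-block form. -/
def Jmat (k : Type*) [Field k] : Matrix (Fin 4) (Fin 4) k :=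
  !![0, 0, 1, 0;
     0, 0, 0, 1;
     -1, 0, 0, 0;
     0, -1, 0, 0]

/-- `g` is a symplectic similitude with similitude factor `l`. -/
def SimCond {k : Type*} [Field k] (g : Matrix (Fin 4) (Fin 4) k) (l : kˣ) : Prop :=
  gᵀ * Jmat k * g = (l : k) • Jmat k

/-- The map `Ψ` interleaving a pair of 2×2 matrices into a 4×4 matrix. -/
def PsiMat {k : Type*} [Field k] (g₁ g₂ : Matrix (Fin 2) (Fin 2) k) :
    Matrix (Fin 4) (Fin 4) k :=
  !![g₁ 0 0, 0, g₁ 0 1, 0;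
     0, g₂ 0 0, 0, g₂ 0 1;
     g₁ 1 0, 0, g₁ 1 1, 0;
     0, g₂ 1 0, 0, g₂ 1 1]

/-- `H = {Ψ(g₁,g₂) : g₁, g₂ invertible, det g₁ = det g₂}` as a set of 4×4 matrices. -/
def HSet (k : Type*) [Field k] : Set (Matrix (Fin 4) (Fin 4) k) :=
  {m | ∃ g₁ g₂ : Matrix (Fin 2) (Fin 2) k,
    IsUnit g₁ ∧ IsUnit g₂ ∧ g₁.det = g₂.det ∧ m = PsiMat g₁ g₂}

/-- The involution `κ`, a 4×4 permutation matrix. -/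
def kappaMat (k : Type*) [Field k] : Matrix (Fin 4) (Fin 4) k :=
  !![0, 1, 0, 0;
     1, 0, 0, 0;
     0, 0, 0, 1;
     0, 0, 1, 0]

/-- `H^{ext}`: the subgroup of GL(4,k) generated by `H ∪ {κ}`. -/
def HextSub (k : Type*) [Field k] : Subgroup (GL (Fin 4) k) :=
  Subgroup.closure
    ({u : GL (Fin 4) k | (u : Matrix (Fin 4) (Fin 4) k) ∈ HSet k} ∪
     {u : GL (Fin 4) k | (u : Matrix (Fin 4) (Fin 4) k) = kappaMat k})

/-- The Klingen parabolic `Q`: elements of `GSp(4,k)` stabilizing the line `k·e₁`. -/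
def QSet (k : Type*) [Field k] : Set (GL (Fin 4) k) :=
  {q | (∃ l : kˣ, SimCond (q : Matrix (Fin 4) (Fin 4) k) l) ∧
    ∃ t : k, (q : Matrix (Fin 4) (Fin 4) k).mulVec (Pi.single (0 : Fin 4) (1 : k)) =
      t • (Pi.single (0 : Fin 4) (1 : k) : Fin 4 → k)}

/-- The auxiliary element `m_A`. -/
def mAmat (k : Type*) [Field k] : Matrix (Fin 4) (Fin 4) k :=
  !![1, 0, 0, 0;
     1, 1, 0, 0;
     0, 0, 1, -1;
     0, 0, 0, 1]

/-!
`Q` is the stabiliser in `GSp(4)` of the line `k·e₁`, so `g ∈ Q·m·H^{ext}` as soon as some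
`u ∈ H^{ext}` maps `m⁻¹e₁` to `g⁻¹e₁`. The group `H^{ext}` lies in `GSp(4)` and acts on
`k⁴ = ⟨e₁, e₃⟩ ⊕ ⟨e₂, e₄⟩` through `SL₂ × SL₂` on the two planes, with `κ` swapping them.
Hence the orbit of `e₁` contains every nonzero vector lying in one of the two planes, and the orbit of
`m_A⁻¹e₁ = e₁ - e₂` contains every vector with nonzero components in both.
-/

section

variable {k : Type*} [Field k]

lemma transpose_mul_mul_mul (A B J : Matrix (Fin 4) (Fin 4) k) :
    (A * B)ᵀ * J * (A * B) = Bᵀ * (Aᵀ * J * A) * B := by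
  simp only [transpose_mul, Matrix.mul_assoc]

variable (k) in
def gsp : Subgroup (GL (Fin 4) k) where
  carrier := {g | ∃ l : kˣ, SimCond (g : Matrix (Fin 4) (Fin 4) k) l}
  mul_mem' := by
    rintro g h ⟨l, hl⟩ ⟨m, hm⟩
    refine ⟨l * m, ?_⟩
    rw [SimCond, Units.val_mul, transpose_mul_mul_mul, hl, Matrix.mul_smul, Matrix.smul_mul,
      hm, smul_smul, Units.val_mul, mul_comm]
  one_mem' := ⟨1, by simp [SimCond]⟩
  inv_mem' := by
    rintro g ⟨l, hl⟩
    refine ⟨l⁻¹, ?_⟩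
    rw [SimCond] at hl ⊢
    set G := (g : Matrix (Fin 4) (Fin 4) k)
    set Gi := ((g⁻¹ : GL (Fin 4) k) : Matrix (Fin 4) (Fin 4) k)
    have key : (l : k) • (Giᵀ * Jmat k * Gi) = Jmat k :=
      calc (l : k) • (Giᵀ * Jmat k * Gi) = Giᵀ * ((l : k) • Jmat k) * Gi := by
            rw [Matrix.mul_smul, Matrix.smul_mul]
        _ = (G * Gi)ᵀ * Jmat k * (G * Gi) := by rw [transpose_mul_mul_mul, hl]
        _ = Jmat k := by
            rw [← Units.val_mul, mul_inv_cancel, Units.val_one, transpose_one, Matrix.one_mul,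
              Matrix.mul_one]
    calc Giᵀ * Jmat k * Gi = (l : k)⁻¹ • ((l : k) • (Giᵀ * Jmat k * Gi)) := by
          rw [smul_smul, inv_mul_cancel₀ l.ne_zero, one_smul]
      _ = _ := by rw [key, Units.val_inv_eq_inv_val]

lemma transpose_psiMat_mul_Jmat_mul (A B : Matrix (Fin 2) (Fin 2) k) :
    (PsiMat A B)ᵀ * Jmat k * PsiMat A B =
      !![0, 0, A.det, 0; 0, 0, 0, B.det; -A.det, 0, 0, 0; 0, -B.det, 0, 0] := by
  simp only [det_fin_two]
  ext i j
  fin_cases i <;> fin_cases j <;> simp [PsiMat, Jmat, mul_apply, Fin.sum_univ_four] <;> ring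

lemma transpose_psiMat_mul_Jmat_mul_of_det_eq (A B : Matrix (Fin 2) (Fin 2) k) (h : A.det = B.det) :
    (PsiMat A B)ᵀ * Jmat k * PsiMat A B = A.det • Jmat k := by
  rw [transpose_psiMat_mul_Jmat_mul, ← h]
  ext i j
  fin_cases i <;> fin_cases j <;> simp [Jmat]

lemma simCond_kappaMat : SimCond (kappaMat k) 1 := by
  rw [SimCond, Units.val_one, one_smul]
  ext i j
  fin_cases i <;> fin_cases j <;> simp [kappaMat, Jmat, mul_apply, Fin.sum_univ_four]

lemma simCond_mAmat : SimCond (mAmat k) 1 := by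
  rw [SimCond, Units.val_one, one_smul]
  ext i j
  fin_cases i <;> fin_cases j <;> simp [mAmat, Jmat, mul_apply, Fin.sum_univ_four]

lemma psiMat_mul (A B C D : Matrix (Fin 2) (Fin 2) k) :
    PsiMat A B * PsiMat C D = PsiMat (A * C) (B * D) := by
  ext i j
  fin_cases i <;> fin_cases j <;> simp [PsiMat, mul_apply, Fin.sum_univ_four, Fin.sum_univ_two]

lemma psiMat_one : PsiMat (1 : Matrix (Fin 2) (Fin 2) k) 1 = 1 := by
  ext i j
  fin_cases i <;> fin_cases j <;> simp [PsiMat, one_apply]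

lemma isUnit_of_mem_HSet {m : Matrix (Fin 4) (Fin 4) k} (hm : m ∈ HSet k) : IsUnit m := by
  obtain ⟨A, B, hA, hB, -, rfl⟩ := hm
  refine IsUnit.of_mul_eq_one (PsiMat A⁻¹ B⁻¹) ?_
  rw [psiMat_mul, mul_nonsing_inv A ((isUnit_iff_isUnit_det A).1 hA),
    mul_nonsing_inv B ((isUnit_iff_isUnit_det B).1 hB), psiMat_one]

lemma HextSub_le_gsp : HextSub k ≤ gsp k := by
  refine (Subgroup.closure_le _).2 (Set.union_subset ?_ ?_)
  · rintro u ⟨A, B, hA, hB, hAB, hu⟩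
    refine ⟨((isUnit_iff_isUnit_det A).1 hA).unit, ?_⟩
    rw [SimCond, hu, IsUnit.unit_spec]
    exact transpose_psiMat_mul_Jmat_mul_of_det_eq A B hAB
  · rintro u (hu : _ = _)
    exact ⟨1, hu ▸ simCond_kappaMat⟩

lemma exists_mem_HextSub_coe_eq_of_mem_HSet {m : Matrix (Fin 4) (Fin 4) k} (hm : m ∈ HSet k) :
    ∃ u ∈ HextSub k, (u : Matrix (Fin 4) (Fin 4) k) = m :=
  ⟨(isUnit_of_mem_HSet hm).unit, Subgroup.subset_closure (Or.inl hm), rfl⟩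

lemma psiMat_mem_HSet {A B : Matrix (Fin 2) (Fin 2) k} (hA : A.det = 1) (hB : B.det = 1) :
    PsiMat A B ∈ HSet k :=
  ⟨A, B, (isUnit_iff_isUnit_det A).2 (hA ▸ isUnit_one),
    (isUnit_iff_isUnit_det B).2 (hB ▸ isUnit_one), hA.trans hB.symm, rfl⟩

lemma psiMat_mulVec (A B : Matrix (Fin 2) (Fin 2) k) (a b : k) :
    PsiMat A B *ᵥ ![a, b, 0, 0] = ![A 0 0 * a, B 0 0 * b, A 1 0 * a, B 1 0 * b] := by
  ext i
  fin_cases i <;> simp [PsiMat, mulVec, dotProduct, Fin.sum_univ_four]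

lemma exists_det_eq_one_col {a c : k} (h : ¬(a = 0 ∧ c = 0)) :
    ∃ A : Matrix (Fin 2) (Fin 2) k, A.det = 1 ∧ A 0 0 = a ∧ A 1 0 = c := by
  by_cases ha : a = 0
  · have hc : c ≠ 0 := fun hc => h ⟨ha, hc⟩
    exact ⟨!![0, -c⁻¹; c, 0], by simp [det_fin_two, hc], by simp [ha], rfl⟩
  · exact ⟨!![a, 0; c, a⁻¹], by simp [det_fin_two, ha], rfl, rfl⟩

lemma kappaMat_mul_self : kappaMat k * kappaMat k = 1 := by
  ext i j
  fin_cases i <;> fin_cases j <;> simp [kappaMat, mul_apply, Fin.sum_univ_four, one_apply]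

lemma exists_mem_HextSub_coe_eq_kappaMat :
    ∃ u ∈ HextSub k, (u : Matrix (Fin 4) (Fin 4) k) = kappaMat k :=
  ⟨Units.mkOfMulEqOne _ _ kappaMat_mul_self, Subgroup.subset_closure (Or.inr rfl), rfl⟩

lemma exists_mem_HextSub_mulVec_single_eq {v : Fin 4 → k} (hv : v ≠ 0)
    (h : (v 0 = 0 ∧ v 2 = 0) ∨ (v 1 = 0 ∧ v 3 = 0)) :
    ∃ u ∈ HextSub k, (u : Matrix (Fin 4) (Fin 4) k) *ᵥ Pi.single 0 1 = v := by
  have hv_eq : ∀ {a b c d : k}, v 0 = a → v 1 = b → v 2 = c → v 3 = d → v = ![a, b, c, d] := by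
    intro a b c d h0 h1 h2 h3
    ext i; fin_cases i <;> simp [h0, h1, h2, h3]
  have he₁ : (Pi.single 0 1 : Fin 4 → k) = ![1, 0, 0, 0] := by
    ext i; fin_cases i <;> simp
  rcases h with ⟨h0, h2⟩ | ⟨h1, h3⟩
  · have h13 : ¬(v 1 = 0 ∧ v 3 = 0) := fun h13 =>
      hv (funext fun i => by fin_cases i <;> simp [h0, h2, h13.1, h13.2])
    obtain ⟨B, hB, hB0, hB1⟩ := exists_det_eq_one_col h13
    obtain ⟨u, hu, hu_coe⟩ :=
      exists_mem_HextSub_coe_eq_of_mem_HSet (psiMat_mem_HSet (det_one (n := Fin 2)) hB)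
    obtain ⟨κ, hκ, hκ_coe⟩ := exists_mem_HextSub_coe_eq_kappaMat (k := k)
    have hκe₁ : kappaMat k *ᵥ ![1, 0, 0, 0] = ![0, 1, 0, 0] := by
      ext i; fin_cases i <;> simp [kappaMat, mulVec, dotProduct, Fin.sum_univ_four]
    refine ⟨u * κ, mul_mem hu hκ, ?_⟩
    rw [Units.val_mul, ← mulVec_mulVec, hu_coe, hκ_coe, he₁, hκe₁, psiMat_mulVec,
      hv_eq h0 hB0.symm h2 hB1.symm]
    simp
  · have h02 : ¬(v 0 = 0 ∧ v 2 = 0) := fun h02 =>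
      hv (funext fun i => by fin_cases i <;> simp [h1, h3, h02.1, h02.2])
    obtain ⟨A, hA, hA0, hA1⟩ := exists_det_eq_one_col h02
    obtain ⟨u, hu, hu_coe⟩ :=
      exists_mem_HextSub_coe_eq_of_mem_HSet (psiMat_mem_HSet hA (det_one (n := Fin 2)))
    refine ⟨u, hu, ?_⟩
    rw [hu_coe, he₁, psiMat_mulVec, hv_eq hA0.symm h1 hA1.symm h3]
    simp

lemma exists_mem_HextSub_mulVec_eq {v : Fin 4 → k} (h02 : ¬(v 0 = 0 ∧ v 2 = 0))
    (h13 : ¬(v 1 = 0 ∧ v 3 = 0)) :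
    ∃ u ∈ HextSub k, (u : Matrix (Fin 4) (Fin 4) k) *ᵥ ![1, -1, 0, 0] = v := by
  obtain ⟨A, hA, hA0, hA1⟩ := exists_det_eq_one_col h02
  obtain ⟨B, hB, hB0, hB1⟩ := exists_det_eq_one_col (a := -v 1) (c := -v 3) (by simpa using h13)
  obtain ⟨u, hu, hu_coe⟩ := exists_mem_HextSub_coe_eq_of_mem_HSet (psiMat_mem_HSet hA hB)
  refine ⟨u, hu, ?_⟩
  rw [hu_coe, psiMat_mulVec, hA0, hA1, hB0, hB1]
  ext i; fin_cases i <;> simp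

lemma exists_mem_gsp_coe_eq_mAmat : ∃ m ∈ gsp k, (m : Matrix (Fin 4) (Fin 4) k) = mAmat k := by
  have hinv : mAmat k * !![1, 0, 0, 0; -1, 1, 0, 0; 0, 0, 1, 1; 0, 0, 0, 1] = 1 := by
    ext i j
    fin_cases i <;> fin_cases j <;> simp [mAmat, mul_apply, Fin.sum_univ_four, one_apply]
  exact ⟨Units.mkOfMulEqOne _ _ hinv, ⟨1, simCond_mAmat⟩, rfl⟩

lemma mAmat_mulVec : mAmat k *ᵥ ![1, -1, 0, 0] = Pi.single 0 1 := by
  ext i; fin_cases i <;> simp [mAmat, mulVec, dotProduct, Fin.sum_univ_four]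

lemma exists_mem_QSet_mul_mul_mem_HextSub {g m u : GL (Fin 4) k} (hg : g ∈ gsp k)
    (hm : m ∈ gsp k) (hu : u ∈ HextSub k) {w : Fin 4 → k}
    (hmw : (m : Matrix (Fin 4) (Fin 4) k) *ᵥ w = Pi.single 0 1)
    (hguw : (g : Matrix (Fin 4) (Fin 4) k) *ᵥ ((u : Matrix (Fin 4) (Fin 4) k) *ᵥ w) =
      Pi.single 0 1) :
    ∃ q ∈ QSet k, ∃ h ∈ HextSub k, (g : Matrix (Fin 4) (Fin 4) k) =
      (q : Matrix (Fin 4) (Fin 4) k) * m * (h : Matrix (Fin 4) (Fin 4) k) := by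
  refine ⟨g * u * m⁻¹, ⟨mul_mem (mul_mem hg (HextSub_le_gsp hu)) (inv_mem hm), 1, ?_⟩,
    u⁻¹, inv_mem hu, ?_⟩
  · rw [one_smul]
    conv_lhs => rw [← hmw]
    rw [mulVec_mulVec, ← Units.val_mul, inv_mul_cancel_right, Units.val_mul, ← mulVec_mulVec,
      hguw]
  · rw [← Units.val_mul, ← Units.val_mul, inv_mul_cancel_right, mul_inv_cancel_right]

end

/-- Double coset decomposition: `G = Q·H^{ext} ∪ Q·m_A·H^{ext}`. -/
theorem stmt12 (k : Type*) [Field k] (g : GL (Fin 4) k)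
    (hg : ∃ l : kˣ, SimCond (g : Matrix (Fin 4) (Fin 4) k) l) :
    (∃ q ∈ QSet k, ∃ h ∈ HextSub k,
      (g : Matrix (Fin 4) (Fin 4) k) =
        (q : Matrix (Fin 4) (Fin 4) k) * (h : Matrix (Fin 4) (Fin 4) k)) ∨
    (∃ q ∈ QSet k, ∃ h ∈ HextSub k,
      (g : Matrix (Fin 4) (Fin 4) k) =
        (q : Matrix (Fin 4) (Fin 4) k) * mAmat k * (h : Matrix (Fin 4) (Fin 4) k)) := by
  set v := ((g⁻¹ : GL (Fin 4) k) : Matrix (Fin 4) (Fin 4) k) *ᵥ Pi.single 0 1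
  have hgv : (g : Matrix (Fin 4) (Fin 4) k) *ᵥ v = Pi.single 0 1 := by
    rw [mulVec_mulVec, ← Units.val_mul, mul_inv_cancel, Units.val_one, one_mulVec]
  by_cases hv : (v 0 = 0 ∧ v 2 = 0) ∨ (v 1 = 0 ∧ v 3 = 0)
  · have hv0 : v ≠ 0 := fun h => by simpa [h] using congrFun hgv 0
    obtain ⟨u, hu, huv⟩ := exists_mem_HextSub_mulVec_single_eq hv0 hv
    left
    simpa using exists_mem_QSet_mul_mul_mem_HextSub hg (one_mem _) hu (one_mulVec _)
      (by rw [huv]; exact hgv)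
  · rw [not_or] at hv
    obtain ⟨u, hu, huv⟩ := exists_mem_HextSub_mulVec_eq hv.1 hv.2
    obtain ⟨m, hm, hm_coe⟩ := exists_mem_gsp_coe_eq_mAmat (k := k)
    right
    rw [← hm_coe]
    exact exists_mem_QSet_mul_mul_mem_HextSub hg hm hu (by rw [hm_coe, mAmat_mulVec])
      (by rw [huv]; exact hgv)
end

section
/- Smooth vectors with a central eigencharacter are translation-invariant: let k be a field equipped with a multiplicative absolute value |·| : k → ℝ₊ which is nontrivial (there exists c ∈ kˣ with 0 < |c| < 1). Let V be a complex vector space, ρ : kˣ → GL(V) and σ : (k,+) → GL(V) group homomorphisms into the group of ℂ-linear automorphisms of V satisfying the compatibility ρ(z) σ(x) ρ(z)⁻¹ = σ(z·x) for all z ∈ kˣ, x ∈ k. Suppose v ∈ V satisfies: (i) there is a function μ : kˣ → ℂˣ with ρ(z)v = μ(z)·v for all z ∈ kˣ, and (ii) there exists δ > 0 such that σ(x)v = v whenever |x| ≤ δ. Then σ(x)v = v for all x ∈ k. -/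
/-- Smooth vectors with a central eigencharacter are translation-invariant: if `v` is a
nontrivial multiplicative absolute value on a field `k`, `ρ` is a (multiplicative)
action of `kˣ` and `σ` an (additive) action of `k` on a complex vector space `V` by
linear automorphisms, intertwined by `ρ(z) σ(x) ρ(z)⁻¹ = σ(z·x)`, and `w ∈ V` is a
`ρ`-eigenvector fixed by `σ(x)` for all sufficiently small `x`, then `w` is fixed by
every `σ(x)`. -/
theorem stmt16 (k : Type*) [Field k] (v : AbsoluteValue k ℝ)
    (hnt : ∃ c : kˣ, 0 < v (c : k) ∧ v (c : k) < 1)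
    (V : Type*) [AddCommGroup V] [Module ℂ V]
    (ρ : kˣ → (V ≃ₗ[ℂ] V)) (hρ : ∀ z w : kˣ, ρ (z * w) = ρ z * ρ w)
    (σ : k → (V ≃ₗ[ℂ] V)) (hσ : ∀ x y : k, σ (x + y) = σ x * σ y)
    (hcompat : ∀ (z : kˣ) (x : k) (u : V), ρ z (σ x u) = σ ((z : k) * x) (ρ z u))
    (w : V) (μ : kˣ → ℂˣ) (hμ : ∀ z : kˣ, ρ z w = ((μ z : ℂˣ) : ℂ) • w)
    (δ : ℝ) (hδ : 0 < δ) (hsmooth : ∀ x : k, v x ≤ δ → σ x w = w) :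
    ∀ x : k, σ x w = w := by
  obtain ⟨c, hc0, hc1⟩ := hnt
  intro x
  -- choose n with v(c)^n * v(x) ≤ δ
  have hvx : 0 ≤ v x := v.nonneg x
  obtain ⟨n, hn⟩ : ∃ n : ℕ, (v (c : k)) ^ n * v x ≤ δ := by
    rcases eq_or_lt_of_le hvx with h0 | h0
    · exact ⟨0, by simp [← h0]; positivity⟩
    · obtain ⟨n, hn⟩ := exists_pow_lt_of_lt_one (div_pos hδ h0) hc1
      exact ⟨n, by
        have := (lt_div_iff₀ h0).mp hn
        linarith⟩
  set z : kˣ := c ^ n with hz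
  have hsmall : v ((z : k) * x) ≤ δ := by
    have : v ((z : k) * x) = (v (c : k)) ^ n * v x := by
      simp [hz, v.map_mul, v.map_pow]
    linarith [this ▸ hn, this]
  have key : ρ z (σ x w) = ρ z w := by
    rw [hcompat, hμ]
    have : σ ((z : k) * x) (((μ z : ℂˣ) : ℂ) • w) = ((μ z : ℂˣ) : ℂ) • σ ((z : k) * x) w :=
      (σ ((z : k) * x)).map_smul _ _
    rw [this, hsmooth _ hsmall]
  exact (ρ z).injective key
end
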